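/- Fix positive integers n, m, real n×n matrices A and L with L symmetric, a real n×m matrix B, reals q and r with r > 0, and a function x̄ : ℝ → ℝⁿ. Let Γ : ℝ → (n×n real matrices) and β : ℝ → ℝⁿ be differentiable with Γ(t) symmetric for all t, satisfying Γ' = (1/r)·Γ B Bᵀ Γ − Γ A − Aᵀ Γ − q·I and β' = ((1/r)·Γ B Bᵀ − Aᵀ) β − q·L x̄. Let x̂ : ℝ → ℝⁿ be differentiable with x̂' = A x̂ − (1/r)·B Bᵀ(Γ x̂ + β), define û(t) = −(1/r)·Bᵀ(Γ(t) x̂(t) + β(t)), and let x : ℝ → ℝⁿ be differentiable with x' = A x + B u for some u : ℝ → ℝᵐ. Set x̃ = x − x̂ and ũ = u − û. Then for every t, the function t ↦ ⟪x̃(t), Γ(t) x̂(t) + β(t)⟫ is differentiable with derivative −r·⟪ũ(t), û(t)⟫ − q·⟪x̃(t), x̂(t) + L x̄(t)⟫. -/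

import Mathlib

/-!
Write `p = Γ x̂ + β`. The Riccati equation for `Γ`, the equation for `β` and the closed-loop
dynamics of `x̂` combine into the costate equation `p' = -Aᵀ p - q (x̂ + L x̄)`, the `B Bᵀ` terms
cancelling, while `x̃' = A x̃ + B ũ`. In `d/dt ⟪x̃, p⟫` the `A`-terms then cancel by adjointness,
leaving `⟪ũ, Bᵀ p⟫ - q ⟪x̃, x̂ + L x̄⟫`, and `Bᵀ p = -r û`.
-/

open scoped RealInnerProductSpace Matrix

attribute [local instance] Matrix.normedAddCommGroup Matrix.normedSpace

namespace Matrix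

variable {ι κ : Type*} [Fintype ι] [Fintype κ] [DecidableEq κ]

theorem inner_toEuclideanLin_left [DecidableEq ι] (M : Matrix ι κ ℝ) (v : EuclideanSpace ℝ κ)
    (w : EuclideanSpace ℝ ι) :
    ⟪toEuclideanLin M v, w⟫ = ⟪v, toEuclideanLin Mᵀ w⟫ := by
  rw [← conjTranspose_eq_transpose_of_trivial, toEuclideanLin_conjTranspose_eq_adjoint,
    LinearMap.adjoint_inner_right]

noncomputable def toEuclideanLinCLM : Matrix ι κ ℝ →L[ℝ]
    (EuclideanSpace ℝ κ →L[ℝ] EuclideanSpace ℝ ι) :=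
  LinearMap.toContinuousLinearMap
    ((LinearMap.toContinuousLinearMap.toLinearMap).comp toEuclideanLin.toLinearMap)

theorem _root_.HasDerivAt.toEuclideanLin_apply {Γ : ℝ → Matrix ι κ ℝ} {Γ' : Matrix ι κ ℝ}
    {v : ℝ → EuclideanSpace ℝ κ} {v' : EuclideanSpace ℝ κ} {t : ℝ}
    (hΓ : HasDerivAt Γ Γ' t) (hv : HasDerivAt v v' t) :
    HasDerivAt (fun s ↦ toEuclideanLin (Γ s) (v s))
      (toEuclideanLin Γ' (v t) + toEuclideanLin (Γ t) v') t :=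
  ((toEuclideanLinCLM (ι := ι) (κ := κ)).hasFDerivAt.comp_hasDerivAt t hΓ).clm_apply hv

end Matrix

open Matrix

variable {ι κ : Type*} [Fintype ι] [DecidableEq ι] [Fintype κ] [DecidableEq κ]

theorem hasDerivAt_inner_of_adjoint_dynamics (A : Matrix ι ι ℝ) (B : Matrix ι κ ℝ)
    {y p : ℝ → EuclideanSpace ℝ ι} {w : EuclideanSpace ℝ κ} {g : EuclideanSpace ℝ ι} {t : ℝ}
    (hy : HasDerivAt y (toEuclideanLin A (y t) + toEuclideanLin B w) t)
    (hp : HasDerivAt p (-toEuclideanLin Aᵀ (p t) - g) t) :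
    HasDerivAt (fun s ↦ ⟪y s, p s⟫) (⟪w, toEuclideanLin Bᵀ (p t)⟫ - ⟪y t, g⟫) t := by
  refine (hy.inner ℝ hp).congr_deriv ?_
  rw [inner_add_left, inner_toEuclideanLin_left, inner_toEuclideanLin_left, inner_sub_right,
    inner_neg_right]
  ring

theorem hasDerivAt_riccati_costate (A L : Matrix ι ι ℝ) (B : Matrix ι κ ℝ) (c q : ℝ)
    {Γ : ℝ → Matrix ι ι ℝ} {β xhat : ℝ → EuclideanSpace ℝ ι} {xbar : EuclideanSpace ℝ ι} {t : ℝ}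
    (hΓ : HasDerivAt Γ (c • (Γ t * B * Bᵀ * Γ t) - Γ t * A - Aᵀ * Γ t - q • 1) t)
    (hβ : HasDerivAt β
      (toEuclideanLin (c • (Γ t * B * Bᵀ) - Aᵀ) (β t) - q • toEuclideanLin L xbar) t)
    (hxhat : HasDerivAt xhat
      (toEuclideanLin A (xhat t) - c • toEuclideanLin (B * Bᵀ)
        (toEuclideanLin (Γ t) (xhat t) + β t)) t) :
    HasDerivAt (fun s ↦ toEuclideanLin (Γ s) (xhat s) + β s)
      (-toEuclideanLin Aᵀ (toEuclideanLin (Γ t) (xhat t) + β t) -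
        q • (xhat t + toEuclideanLin L xbar)) t := by
  refine ((hΓ.toEuclideanLin_apply hxhat).add hβ).congr_deriv ?_
  simp only [map_sub, map_add, map_smul, LinearMap.sub_apply, LinearMap.smul_apply,
    toLpLin_mul_same, LinearMap.comp_apply, toLpLin_one, LinearMap.id_apply]
  module

theorem hasDerivAt_sub_of_linear_dynamics (A : Matrix ι ι ℝ) (B : Matrix ι κ ℝ) (c : ℝ)
    {x xhat : ℝ → EuclideanSpace ℝ ι} {u : EuclideanSpace ℝ κ} {p : EuclideanSpace ℝ ι} {t : ℝ}
    (hx : HasDerivAt x (toEuclideanLin A (x t) + toEuclideanLin B u) t)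
    (hxhat : HasDerivAt xhat (toEuclideanLin A (xhat t) - c • toEuclideanLin (B * Bᵀ) p) t) :
    HasDerivAt (fun s ↦ x s - xhat s)
      (toEuclideanLin A (x t - xhat t) + toEuclideanLin B (u - (-c) • toEuclideanLin Bᵀ p)) t := by
  refine (hx.sub hxhat).congr_deriv ?_
  simp only [map_sub, map_smul, toLpLin_mul_same, LinearMap.comp_apply]
  module

theorem adjoint_variable_identity_general (n m : ℕ)
    (A L : Matrix (Fin n) (Fin n) ℝ)
    (B : Matrix (Fin n) (Fin m) ℝ) (q r : ℝ) (hr : 0 < r)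
    (xbar : ℝ → EuclideanSpace ℝ (Fin n))
    (Γ : ℝ → Matrix (Fin n) (Fin n) ℝ) (β : ℝ → EuclideanSpace ℝ (Fin n))
    (hΓ : ∀ t : ℝ, HasDerivAt Γ
      ((1 / r) • (Γ t * B * Bᵀ * Γ t) - Γ t * A - Aᵀ * Γ t -
        q • (1 : Matrix (Fin n) (Fin n) ℝ)) t)
    (hβ : ∀ t : ℝ, HasDerivAt β
      (Matrix.toEuclideanLin ((1 / r) • (Γ t * B * Bᵀ) - Aᵀ) (β t) -
        q • Matrix.toEuclideanLin L (xbar t)) t)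
    (xhat : ℝ → EuclideanSpace ℝ (Fin n))
    (hxhat : ∀ t : ℝ, HasDerivAt xhat
      (Matrix.toEuclideanLin A (xhat t) -
        (1 / r) • Matrix.toEuclideanLin (B * Bᵀ)
          (Matrix.toEuclideanLin (Γ t) (xhat t) + β t)) t)
    (u : ℝ → EuclideanSpace ℝ (Fin m)) (x : ℝ → EuclideanSpace ℝ (Fin n))
    (hx : ∀ t : ℝ, HasDerivAt x
      (Matrix.toEuclideanLin A (x t) + Matrix.toEuclideanLin B (u t)) t)
    (t : ℝ) :
    HasDerivAt
      (fun s : ℝ => ⟪x s - xhat s, Matrix.toEuclideanLin (Γ s) (xhat s) + β s⟫)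
      (-r * ⟪u t - (-(1 / r)) •
            Matrix.toEuclideanLin Bᵀ (Matrix.toEuclideanLin (Γ t) (xhat t) + β t),
          (-(1 / r)) •
            Matrix.toEuclideanLin Bᵀ (Matrix.toEuclideanLin (Γ t) (xhat t) + β t)⟫ -
        q * ⟪x t - xhat t, xhat t + Matrix.toEuclideanLin L (xbar t)⟫) t := by
  have hstate := hasDerivAt_sub_of_linear_dynamics A B (1 / r) (hx t) (hxhat t)
  have hcostate := hasDerivAt_riccati_costate A L B (1 / r) q (hΓ t) (hβ t) (hxhat t)
  refine (hasDerivAt_inner_of_adjoint_dynamics A B hstate hcostate).congr_deriv ?_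
  simp only [real_inner_smul_right]
  field_simp

/-- Adjoint-variable identity: along the difference `x̃ = x − x̂` between an arbitrary
admissible trajectory and the closed-loop mean-field trajectory,
`d/dt ⟪x̃, Γ x̂ + β⟫ = −r⟪ũ, û⟫ − q⟪x̃, x̂ + L x̄⟫`, where `ũ = u − û` and
`û = −(1/r)Bᵀ(Γ x̂ + β)`. -/
theorem adjoint_variable_identity (n m : ℕ) (hn : 0 < n) (hm : 0 < m)
    (A L : Matrix (Fin n) (Fin n) ℝ) (hL : L.IsSymm)
    (B : Matrix (Fin n) (Fin m) ℝ) (q r : ℝ) (hr : 0 < r)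
    (xbar : ℝ → EuclideanSpace ℝ (Fin n))
    (Γ : ℝ → Matrix (Fin n) (Fin n) ℝ) (β : ℝ → EuclideanSpace ℝ (Fin n))
    (hΓs : ∀ t : ℝ, (Γ t).IsSymm)
    (hΓ : ∀ t : ℝ, HasDerivAt Γ
      ((1 / r) • (Γ t * B * Bᵀ * Γ t) - Γ t * A - Aᵀ * Γ t -
        q • (1 : Matrix (Fin n) (Fin n) ℝ)) t)
    (hβ : ∀ t : ℝ, HasDerivAt β
      (Matrix.toEuclideanLin ((1 / r) • (Γ t * B * Bᵀ) - Aᵀ) (β t) -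
        q • Matrix.toEuclideanLin L (xbar t)) t)
    (xhat : ℝ → EuclideanSpace ℝ (Fin n))
    (hxhat : ∀ t : ℝ, HasDerivAt xhat
      (Matrix.toEuclideanLin A (xhat t) -
        (1 / r) • Matrix.toEuclideanLin (B * Bᵀ)
          (Matrix.toEuclideanLin (Γ t) (xhat t) + β t)) t)
    (u : ℝ → EuclideanSpace ℝ (Fin m)) (x : ℝ → EuclideanSpace ℝ (Fin n))
    (hx : ∀ t : ℝ, HasDerivAt x
      (Matrix.toEuclideanLin A (x t) + Matrix.toEuclideanLin B (u t)) t)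
    (t : ℝ) :
    HasDerivAt
      (fun s : ℝ => ⟪x s - xhat s, Matrix.toEuclideanLin (Γ s) (xhat s) + β s⟫)
      (-r * ⟪u t - (-(1 / r)) •
            Matrix.toEuclideanLin Bᵀ (Matrix.toEuclideanLin (Γ t) (xhat t) + β t),
          (-(1 / r)) •
            Matrix.toEuclideanLin Bᵀ (Matrix.toEuclideanLin (Γ t) (xhat t) + β t)⟫ -
        q * ⟪x t - xhat t, xhat t + Matrix.toEuclideanLin L (xbar t)⟫) t :=
  adjoint_variable_identity_general n m A L B q r hr xbar Γ β hΓ hβ xhat hxhat u x hx t
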